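/- Let φ, ψ : ℝ² → ℝ be Schwartz functions and let C_𝔣 > 0 satisfy 1/C_𝔣 = ∫_ℝ (1 − cos(2πz))/|z|^{3/2} dz. For a function χ : ℝ² → ℝ define (√𝔇_{x₁}χ)(x₁,x₂) = C_𝔣·∫_ℝ (χ(x₁,x₂) − χ(x₁−z,x₂))/|z|^{3/2} dz, define √𝔇_{x₂} analogously in the second variable, and √𝔇^{⊗2} = √𝔇_{x₁}√𝔇_{x₂}. Then for all (x₁,x₂) ∈ ℝ², (√𝔇^{⊗2}(φψ))(x₁,x₂) = (√𝔇^{⊗2}φ)(x₁,x₂)·ψ(x₁,x₂) + C_𝔣·∫_ℝ (√𝔇_{x₁}φ)(x₁, x₂−z)·(ψ(x₁,x₂) − ψ(x₁,x₂−z))/|z|^{3/2} dz + C_𝔣·∫_ℝ (√𝔇_{x₂}φ)(x₁−z, x₂)·(ψ(x₁,x₂) − ψ(x₁−z,x₂))/|z|^{3/2} dz + C_𝔣²·∬_{ℝ²} φ(x₁−z₁, x₂−z₂)·A(z₁,z₂) / (|z₁|^{3/2}|z₂|^{3/2}) dz₁ dz₂, where A(z₁,z₂) = ψ(x₁,x₂)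 − ψ(x₁−z₁,x₂) − ψ(x₁,x₂−z₂) + ψ(x₁−z₁,x₂−z₂). -/

import Mathlib

/-!
Writing `Δ_z χ(x) = χ(x) - χ(x₁ - z₁, x₂) - χ(x₁, x₂ - z₂) + χ(x - z)` for the mixed second
difference, applying `√𝔇_{x₁}` to `√𝔇_{x₂}χ` gives
`√𝔇^{⊗2}χ(x) = C_𝔣² ∬ Δ_z χ(x) / (|z₁|^{3/2} |z₂|^{3/2})`. The discrete Leibniz rule splits
`Δ_z(φψ)(x)` into four products; each is bounded by a multiple of
`min(1, |z₁|) · min(1, |z₂|)`, which is integrable against the kernel, so the double integral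
splits into four absolutely convergent ones. Fubini turns the two middle ones into the
one-dimensional integrals of `√𝔇_{x₁}φ` and `√𝔇_{x₂}φ` against differences of `ψ`.
-/

open MeasureTheory

/-- The `1/2`-fractional derivative in the first variable, in singular-integral form. -/
noncomputable def sqrtD1 (Cf : ℝ) (χ : ℝ → ℝ → ℝ) (x₁ x₂ : ℝ) : ℝ :=
  Cf * ∫ z : ℝ, (χ x₁ x₂ - χ (x₁ - z) x₂) / |z| ^ ((3:ℝ)/2)

/-- The `1/2`-fractional derivative in the second variable, in singular-integral form. -/
noncomputable def sqrtD2 (Cf : ℝ) (χ : ℝ → ℝ → ℝ) (x₁ x₂ : ℝ) : ℝ :=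
  Cf * ∫ z : ℝ, (χ x₁ x₂ - χ x₁ (x₂ - z)) / |z| ^ ((3:ℝ)/2)

/-- The cross fractional derivative `√𝔇^{⊗2} = √𝔇_{x₁}√𝔇_{x₂}`. -/
noncomputable def sqrtDD (Cf : ℝ) (χ : ℝ → ℝ → ℝ) : ℝ → ℝ → ℝ :=
  sqrtD1 Cf (sqrtD2 Cf χ)

open Set
open scoped SchwartzMap

lemma le_mul_min_one {d A a : ℝ} (h₁ : d ≤ A) (h₂ : d ≤ A * a) : d ≤ A * min 1 a := by
  rcases min_choice 1 a with h | h <;> rw [h] <;> simpa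

lemma le_mul_min_one_mul_min_one {d A a b : ℝ} (h₁ : d ≤ A) (h₂ : d ≤ A * a) (h₃ : d ≤ A * b)
    (h₄ : d ≤ A * (a * b)) : d ≤ A * (min 1 a * min 1 b) := by
  rcases min_choice 1 a with ha | ha <;> rcases min_choice 1 b with hb | hb <;> rw [ha, hb] <;>
    simpa

lemma abs_mul_le_of_abs_le {u v A B : ℝ} (hu : |u| ≤ A) (hv : |v| ≤ B) : |u * v| ≤ A * B :=
  abs_mul u v ▸ mul_le_mul hu hv (abs_nonneg v) ((abs_nonneg u).trans hu)

lemma abs_mul_sub_mul_le {a b c d A B m : ℝ} (ha : |a| ≤ A) (hd : |d| ≤ B)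
    (hac : |a - c| ≤ A * m) (hbd : |b - d| ≤ B * m) : |a * b - c * d| ≤ 2 * (A * B) * m := by
  have h₁ := abs_mul_le_of_abs_le ha hbd
  have h₂ := abs_mul_le_of_abs_le hac hd
  calc |a * b - c * d| = |a * (b - d) + (a - c) * d| := by ring_nf
    _ ≤ 2 * (A * B) * m := by linarith [abs_add_le (a * (b - d)) ((a - c) * d)]

lemma integrable_of_even_of_integrableOn_Ioi {E : Type*} [NormedAddCommGroup E] {f : ℝ → E}
    (heven : ∀ x, f (-x) = f x) (hf : IntegrableOn f (Ioi 0)) : Integrable f := by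
  have hneg : IntegrableOn f (Iio 0) := by
    have := ((Measure.measurePreserving_neg volume).integrableOn_comp_preimage
      (Homeomorph.neg ℝ).measurableEmbedding).2 hf
    simpa [Function.comp_def, heven] using this
  rw [← integrableOn_univ, ← Iio_union_Ici]
  exact hneg.union ((integrableOn_Ici_iff_integrableOn_Ioi (f := f)).2 hf)

lemma integrable_min_one_abs_div_rpow {p : ℝ} (hp₁ : 1 < p) (hp₂ : p < 2) :
    Integrable fun z : ℝ => min 1 |z| / |z| ^ p := by
  refine integrable_of_even_of_integrableOn_Ioi (fun z => by simp) ?_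
  rw [← Ioc_union_Ioi_eq_Ioi zero_le_one]
  refine IntegrableOn.union ?_ ?_
  · have : IntegrableOn (fun z : ℝ => z ^ (1 - p)) (Ioc 0 1) := by
      rw [integrableOn_Ioc_iff_integrableOn_Ioo,
        intervalIntegral.integrableOn_Ioo_rpow_iff one_pos]
      linarith
    refine this.congr_fun (fun z hz => ?_) measurableSet_Ioc
    beta_reduce
    rw [abs_of_pos hz.1, min_eq_right hz.2, Real.rpow_sub hz.1, Real.rpow_one]
  · have : IntegrableOn (fun z : ℝ => z ^ (-p)) (Ioi 1) :=
      integrableOn_Ioi_rpow_of_lt (by linarith) one_pos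
    refine this.congr_fun (fun z hz => ?_) measurableSet_Ioi
    have hz : (1 : ℝ) < z := hz
    beta_reduce
    rw [abs_of_pos (one_pos.trans hz), min_eq_left hz.le, Real.rpow_neg (by linarith), one_div]

lemma integrable_div_abs_rpow_of_abs_le {p : ℝ} (hp₁ : 1 < p) (hp₂ : p < 2) {G : ℝ → ℝ}
    (hG : Continuous G) {A : ℝ} (hb : ∀ z, |G z| ≤ A * min 1 |z|) :
    Integrable fun z => G z / |z| ^ p := by
  refine ((integrable_min_one_abs_div_rpow hp₁ hp₂).const_mul A).mono'
    (hG.measurable.div (by fun_prop)).aestronglyMeasurable (ae_of_all _ fun z => ?_)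
  rw [Real.norm_eq_abs, abs_div, abs_of_nonneg (by positivity : (0 : ℝ) ≤ |z| ^ p),
    ← mul_div_assoc]
  exact div_le_div_of_nonneg_right (hb z) (by positivity)

lemma integrable_div_abs_rpow_mul_abs_rpow_of_abs_le {p : ℝ} (hp₁ : 1 < p) (hp₂ : p < 2)
    {G : ℝ × ℝ → ℝ} (hG : Continuous G) {A : ℝ}
    (hb : ∀ z, |G z| ≤ A * (min 1 |z.1| * min 1 |z.2|)) :
    Integrable fun z : ℝ × ℝ => G z / (|z.1| ^ p * |z.2| ^ p) := by
  have hJ := integrable_min_one_abs_div_rpow hp₁ hp₂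
  refine ((hJ.mul_prod hJ).const_mul A).mono'
    (hG.measurable.div (by fun_prop)).aestronglyMeasurable (ae_of_all _ fun z => ?_)
  rw [Real.norm_eq_abs, abs_div, abs_of_nonneg (by positivity : (0 : ℝ) ≤ |z.1| ^ p * |z.2| ^ p),
    div_mul_div_comm, ← mul_div_assoc]
  exact div_le_div_of_nonneg_right (hb z) (by positivity)

def mixedDiff (f : ℝ × ℝ → ℝ) (x₁ x₂ z₁ z₂ : ℝ) : ℝ :=
  f (x₁, x₂) - f (x₁ - z₁, x₂) - f (x₁, x₂ - z₂) + f (x₁ - z₁, x₂ - z₂)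

lemma mixedDiff_mul (f g : ℝ × ℝ → ℝ) (x₁ x₂ z₁ z₂ : ℝ) :
    mixedDiff (fun y => f y * g y) x₁ x₂ z₁ z₂ =
      mixedDiff f x₁ x₂ z₁ z₂ * g (x₁, x₂)
      + (f (x₁, x₂ - z₂) - f (x₁ - z₁, x₂ - z₂)) * (g (x₁, x₂) - g (x₁, x₂ - z₂))
      + (f (x₁ - z₁, x₂) - f (x₁ - z₁, x₂ - z₂)) * (g (x₁, x₂) - g (x₁ - z₁, x₂))
      + f (x₁ - z₁, x₂ - z₂) * mixedDiff g x₁ x₂ z₁ z₂ := by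
  simp only [mixedDiff]
  ring

/-- Boundedness and Lipschitz bounds combined into the scale `min 1 |z|`, which is integrable
against the kernel `|z|^{-3/2}` both at `0` and at infinity. -/
structure HasDifferenceBounds (f : ℝ × ℝ → ℝ) (C : ℝ) : Prop where
  continuous : Continuous f
  abs_le : ∀ y, |f y| ≤ C
  abs_sub_le₁ : ∀ y₁ y₂ z, |f (y₁, y₂) - f (y₁ - z, y₂)| ≤ C * min 1 |z|
  abs_sub_le₂ : ∀ y₁ y₂ z, |f (y₁, y₂) - f (y₁, y₂ - z)| ≤ C * min 1 |z|
  abs_mixedDiff_le : ∀ y₁ y₂ z₁ z₂, |mixedDiff f y₁ y₂ z₁ z₂| ≤ C * (min 1 |z₁| * min 1 |z₂|)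

namespace HasDifferenceBounds

variable {f g : ℝ × ℝ → ℝ} {C D : ℝ}

lemma nonneg (hf : HasDifferenceBounds f C) : 0 ≤ C := (abs_nonneg _).trans (hf.abs_le 0)

lemma mul (hf : HasDifferenceBounds f C) (hg : HasDifferenceBounds g D) :
    HasDifferenceBounds (fun y => f y * g y) (4 * (C * D)) := by
  have hCD : 0 ≤ C * D := mul_nonneg hf.nonneg hg.nonneg
  have hm : ∀ z : ℝ, 0 ≤ C * D * min 1 |z| := fun z =>
    mul_nonneg hCD (le_min zero_le_one (abs_nonneg z))
  refine ⟨hf.continuous.mul hg.continuous, fun y => ?_, fun y₁ y₂ z => ?_, fun y₁ y₂ z => ?_,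
    fun y₁ y₂ z₁ z₂ => ?_⟩
  · linarith [abs_mul_le_of_abs_le (hf.abs_le y) (hg.abs_le y)]
  · linarith [hm z, abs_mul_sub_mul_le (hf.abs_le _) (hg.abs_le _) (hf.abs_sub_le₁ y₁ y₂ z)
      (hg.abs_sub_le₁ y₁ y₂ z)]
  · linarith [hm z, abs_mul_sub_mul_le (hf.abs_le _) (hg.abs_le _) (hf.abs_sub_le₂ y₁ y₂ z)
      (hg.abs_sub_le₂ y₁ y₂ z)]
  · set m₁₂ := min 1 |z₁| * min 1 |z₂|
    have h₁ : |mixedDiff f y₁ y₂ z₁ z₂ * g (y₁, y₂)| ≤ C * D * m₁₂ :=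
      (abs_mul_le_of_abs_le (hf.abs_mixedDiff_le y₁ y₂ z₁ z₂) (hg.abs_le _)).trans_eq (by ring)
    have h₂ : |(f (y₁, y₂ - z₂) - f (y₁ - z₁, y₂ - z₂)) * (g (y₁, y₂) - g (y₁, y₂ - z₂))|
        ≤ C * D * m₁₂ :=
      (abs_mul_le_of_abs_le (hf.abs_sub_le₁ _ _ _) (hg.abs_sub_le₂ _ _ _)).trans_eq (by ring)
    have h₃ : |(f (y₁ - z₁, y₂) - f (y₁ - z₁, y₂ - z₂)) * (g (y₁, y₂) - g (y₁ - z₁, y₂))|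
        ≤ C * D * m₁₂ :=
      (abs_mul_le_of_abs_le (hf.abs_sub_le₂ _ _ _) (hg.abs_sub_le₁ _ _ _)).trans_eq (by ring)
    have h₄ : |f (y₁ - z₁, y₂ - z₂) * mixedDiff g y₁ y₂ z₁ z₂| ≤ C * D * m₁₂ :=
      (abs_mul_le_of_abs_le (hf.abs_le _) (hg.abs_mixedDiff_le y₁ y₂ z₁ z₂)).trans_eq (by ring)
    rw [mixedDiff_mul]
    refine ((abs_add_le _ _).trans (add_le_add_left (abs_add_three _ _ _) _)).trans ?_
    linarith

lemma integrable_sub_div₂ (hf : HasDifferenceBounds f C) (y₁ y₂ : ℝ) :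
    Integrable fun z : ℝ => (f (y₁, y₂) - f (y₁, y₂ - z)) / |z| ^ ((3:ℝ)/2) :=
  integrable_div_abs_rpow_of_abs_le (by norm_num) (by norm_num)
    (by have := hf.continuous; fun_prop) (hf.abs_sub_le₂ y₁ y₂)

lemma integrable_mixedDiff_div (hf : HasDifferenceBounds f C) (x₁ x₂ : ℝ) :
    Integrable fun z : ℝ × ℝ =>
      mixedDiff f x₁ x₂ z.1 z.2 / (|z.1| ^ ((3:ℝ)/2) * |z.2| ^ ((3:ℝ)/2)) :=
  integrable_div_abs_rpow_mul_abs_rpow_of_abs_le (by norm_num) (by norm_num)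
    (by have := hf.continuous; unfold mixedDiff; fun_prop)
    fun z => hf.abs_mixedDiff_le x₁ x₂ z.1 z.2

end HasDifferenceBounds

section
variable {E F : Type*} [NormedAddCommGroup E] [NormedSpace ℝ E] [NormedAddCommGroup F]
  [NormedSpace ℝ F]

lemma SchwartzMap.norm_sub_le_seminorm_mul (f : 𝓢(E, F)) (x y : E) :
    ‖f x - f y‖ ≤ SchwartzMap.seminorm ℝ 0 1 f * ‖x - y‖ :=
  convex_univ.norm_image_sub_le_of_norm_fderiv_le (fun z _ => f.differentiableAt)
    (fun z _ => by simpa [norm_iteratedFDeriv_one] using f.norm_iteratedFDeriv_le_seminorm ℝ 1 z)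
    (mem_univ y) (mem_univ x)

lemma norm_mixed_second_difference_le {f : E → F} (hf : Differentiable ℝ f) {K : ℝ}
    (hK : ∀ x y, ‖fderiv ℝ f x - fderiv ℝ f y‖ ≤ K * ‖x - y‖) (x a b : E) :
    ‖f x - f (x - a) - f (x - b) + f (x - a - b)‖ ≤ K * ‖a‖ * ‖b‖ := by
  set h : E → F := fun y => f y - f (y - b)
  have hderiv : ∀ y, HasFDerivAt h (fderiv ℝ f y - fderiv ℝ f (y - b)) y := fun y =>
    (hf y).hasFDerivAt.sub ((hf (y - b)).hasFDerivAt.comp y ((hasFDerivAt_id y).sub_const b))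
  have := convex_univ.norm_image_sub_le_of_norm_hasFDerivWithin_le
    (fun y _ => (hderiv y).hasFDerivWithinAt) (fun y _ => by simpa using hK y (y - b))
    (mem_univ (x - a)) (mem_univ x)
  calc _ = ‖h x - h (x - a)‖ := by simp only [h, sub_right_comm x a b]; congr 1; abel
    _ ≤ K * ‖b‖ * ‖x - (x - a)‖ := this
    _ = K * ‖a‖ * ‖b‖ := by rw [sub_sub_cancel]; ring

end

namespace SchwartzMap

lemma abs_sub_le₁ (f : 𝓢(ℝ × ℝ, ℝ)) (y₁ y₂ z : ℝ) :
    |f (y₁, y₂) - f (y₁ - z, y₂)| ≤ SchwartzMap.seminorm ℝ 0 1 f * |z| := by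
  simpa [Prod.norm_def] using f.norm_sub_le_seminorm_mul (y₁, y₂) (y₁ - z, y₂)

lemma abs_sub_le₂ (f : 𝓢(ℝ × ℝ, ℝ)) (y₁ y₂ z : ℝ) :
    |f (y₁, y₂) - f (y₁, y₂ - z)| ≤ SchwartzMap.seminorm ℝ 0 1 f * |z| := by
  simpa [Prod.norm_def] using f.norm_sub_le_seminorm_mul (y₁, y₂) (y₁, y₂ - z)

lemma abs_mixedDiff_le (f : 𝓢(ℝ × ℝ, ℝ)) (y₁ y₂ z₁ z₂ : ℝ) :
    |mixedDiff f y₁ y₂ z₁ z₂|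
      ≤ SchwartzMap.seminorm ℝ 0 1 (fderivCLM ℝ (ℝ × ℝ) ℝ f) * |z₁| * |z₂| := by
  have := norm_mixed_second_difference_le f.differentiable
    (fun x y => (fderivCLM ℝ (ℝ × ℝ) ℝ f).norm_sub_le_seminorm_mul x y) (y₁, y₂) (z₁, 0) (0, z₂)
  simpa [mixedDiff, Prod.norm_def] using this

lemma hasDifferenceBounds (f : 𝓢(ℝ × ℝ, ℝ)) : ∃ C, HasDifferenceBounds f C := by
  set B := SchwartzMap.seminorm ℝ 0 0 f
  set L := SchwartzMap.seminorm ℝ 0 1 f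
  set K := SchwartzMap.seminorm ℝ 0 1 (fderivCLM ℝ (ℝ × ℝ) ℝ f)
  have hB : ∀ y, |f y| ≤ B := f.norm_le_seminorm ℝ
  have hB₀ : 0 ≤ B := apply_nonneg _ _
  have hL : 0 ≤ L := apply_nonneg _ _
  have hK : 0 ≤ K := apply_nonneg _ _
  have habs : ∀ z : ℝ, 0 ≤ |z| := abs_nonneg
  refine ⟨4 * B + 2 * L + K, f.continuous, fun y => ?_, fun y₁ y₂ z => ?_, fun y₁ y₂ z => ?_,
    fun y₁ y₂ z₁ z₂ => ?_⟩
  · linarith [hB y]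
  · refine le_mul_min_one ?_ ?_
    · linarith [abs_sub (f (y₁, y₂)) (f (y₁ - z, y₂)), hB (y₁, y₂), hB (y₁ - z, y₂)]
    · nlinarith [f.abs_sub_le₁ y₁ y₂ z, habs z]
  · refine le_mul_min_one ?_ ?_
    · linarith [abs_sub (f (y₁, y₂)) (f (y₁, y₂ - z)), hB (y₁, y₂), hB (y₁, y₂ - z)]
    · nlinarith [f.abs_sub_le₂ y₁ y₂ z, habs z]
  · have h₁ : mixedDiff f y₁ y₂ z₁ z₂
        = (f (y₁, y₂) - f (y₁ - z₁, y₂)) - (f (y₁, y₂ - z₂) - f (y₁ - z₁, y₂ - z₂)) := by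
      simp only [mixedDiff]; ring
    have h₂ : mixedDiff f y₁ y₂ z₁ z₂
        = (f (y₁, y₂) - f (y₁, y₂ - z₂)) - (f (y₁ - z₁, y₂) - f (y₁ - z₁, y₂ - z₂)) := by
      simp only [mixedDiff]; ring
    refine le_mul_min_one_mul_min_one ?_ ?_ ?_ ?_
    · rw [h₁]
      linarith [abs_sub (f (y₁, y₂) - f (y₁ - z₁, y₂)) (f (y₁, y₂ - z₂) - f (y₁ - z₁, y₂ - z₂)),
        abs_sub (f (y₁, y₂)) (f (y₁ - z₁, y₂)), abs_sub (f (y₁, y₂ - z₂)) (f (y₁ - z₁, y₂ - z₂)),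
        hB (y₁, y₂), hB (y₁ - z₁, y₂), hB (y₁, y₂ - z₂), hB (y₁ - z₁, y₂ - z₂)]
    · rw [h₁]
      nlinarith [abs_sub (f (y₁, y₂) - f (y₁ - z₁, y₂)) (f (y₁, y₂ - z₂) - f (y₁ - z₁, y₂ - z₂)),
        f.abs_sub_le₁ y₁ y₂ z₁, f.abs_sub_le₁ y₁ (y₂ - z₂) z₁, habs z₁]
    · rw [h₂]
      nlinarith [abs_sub (f (y₁, y₂) - f (y₁, y₂ - z₂)) (f (y₁ - z₁, y₂) - f (y₁ - z₁, y₂ - z₂)),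
        f.abs_sub_le₂ y₁ y₂ z₂, f.abs_sub_le₂ (y₁ - z₁) y₂ z₂, habs z₂]
    · nlinarith [f.abs_mixedDiff_le y₁ y₂ z₁ z₂, mul_nonneg (habs z₁) (habs z₂)]

end SchwartzMap

theorem sqrtDD_eq_integral_integral (Cf : ℝ) {f : ℝ × ℝ → ℝ}
    (hf : ∀ y₁ y₂, Integrable fun z : ℝ => (f (y₁, y₂) - f (y₁, y₂ - z)) / |z| ^ ((3:ℝ)/2))
    (x₁ x₂ : ℝ) :
    sqrtDD Cf (fun y₁ y₂ => f (y₁, y₂)) x₁ x₂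
      = Cf ^ 2 * ∫ z₁ : ℝ, ∫ z₂ : ℝ,
          mixedDiff f x₁ x₂ z₁ z₂ / (|z₁| ^ ((3:ℝ)/2) * |z₂| ^ ((3:ℝ)/2)) := by
  have hdiff : ∀ z₁, sqrtD2 Cf (fun y₁ y₂ => f (y₁, y₂)) x₁ x₂
      - sqrtD2 Cf (fun y₁ y₂ => f (y₁, y₂)) (x₁ - z₁) x₂
      = Cf * ∫ z₂ : ℝ, mixedDiff f x₁ x₂ z₁ z₂ / |z₂| ^ ((3:ℝ)/2) := by
    intro z₁
    rw [sqrtD2, sqrtD2, ← mul_sub, ← integral_sub (hf _ _) (hf _ _)]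
    congr 1
    refine integral_congr_ae (ae_of_all _ fun z₂ => ?_)
    simp only [mixedDiff]
    ring
  simp only [sqrtDD, sqrtD1, hdiff, mul_div_assoc, ← integral_div, integral_const_mul]
  rw [sq, mul_assoc]
  congr 2
  refine integral_congr_ae (ae_of_all _ fun z₁ => integral_congr_ae (ae_of_all _ fun z₂ => ?_))
  ring

theorem HasDifferenceBounds.sqrtDD_eq_integral {f : ℝ × ℝ → ℝ} {C : ℝ}
    (hf : HasDifferenceBounds f C) (Cf x₁ x₂ : ℝ) :
    sqrtDD Cf (fun y₁ y₂ => f (y₁, y₂)) x₁ x₂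
      = Cf ^ 2 * ∫ z : ℝ × ℝ,
          mixedDiff f x₁ x₂ z.1 z.2 / (|z.1| ^ ((3:ℝ)/2) * |z.2| ^ ((3:ℝ)/2)) := by
  rw [sqrtDD_eq_integral_integral Cf hf.integrable_sub_div₂, Measure.volume_eq_prod,
    integral_prod _ (hf.integrable_mixedDiff_div x₁ x₂)]

theorem mul_integral_sqrtD1_mul_div_eq (Cf : ℝ) {f : ℝ × ℝ → ℝ} {w : ℝ → ℝ} {x₁ x₂ : ℝ}
    (h : Integrable fun z : ℝ × ℝ => (f (x₁, x₂ - z.2) - f (x₁ - z.1, x₂ - z.2)) * w z.2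
      / (|z.1| ^ ((3:ℝ)/2) * |z.2| ^ ((3:ℝ)/2))) :
    Cf * ∫ z : ℝ, sqrtD1 Cf (fun y₁ y₂ => f (y₁, y₂)) x₁ (x₂ - z) * w z / |z| ^ ((3:ℝ)/2)
      = Cf ^ 2 * ∫ z : ℝ × ℝ, (f (x₁, x₂ - z.2) - f (x₁ - z.1, x₂ - z.2)) * w z.2
          / (|z.1| ^ ((3:ℝ)/2) * |z.2| ^ ((3:ℝ)/2)) := by
  rw [Measure.volume_eq_prod, integral_prod_symm _ h]
  have hinner : ∀ z₂ : ℝ, ∫ z₁ : ℝ, (f (x₁, x₂ - z₂) - f (x₁ - z₁, x₂ - z₂)) * w z₂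
      / (|z₁| ^ ((3:ℝ)/2) * |z₂| ^ ((3:ℝ)/2))
      = (∫ z₁ : ℝ, (f (x₁, x₂ - z₂) - f (x₁ - z₁, x₂ - z₂)) / |z₁| ^ ((3:ℝ)/2))
          * (w z₂ / |z₂| ^ ((3:ℝ)/2)) := by
    intro z₂
    rw [← integral_mul_const]
    exact integral_congr_ae (ae_of_all _ fun z₁ => by ring)
  simp only [hinner]
  simp only [sqrtD1, mul_assoc, mul_div_assoc, integral_const_mul]
  ring

theorem mul_integral_sqrtD2_mul_div_eq (Cf : ℝ) {f : ℝ × ℝ → ℝ} {w : ℝ → ℝ} {x₁ x₂ : ℝ}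
    (h : Integrable fun z : ℝ × ℝ => (f (x₁ - z.1, x₂) - f (x₁ - z.1, x₂ - z.2)) * w z.1
      / (|z.1| ^ ((3:ℝ)/2) * |z.2| ^ ((3:ℝ)/2))) :
    Cf * ∫ z : ℝ, sqrtD2 Cf (fun y₁ y₂ => f (y₁, y₂)) (x₁ - z) x₂ * w z / |z| ^ ((3:ℝ)/2)
      = Cf ^ 2 * ∫ z : ℝ × ℝ, (f (x₁ - z.1, x₂) - f (x₁ - z.1, x₂ - z.2)) * w z.1
          / (|z.1| ^ ((3:ℝ)/2) * |z.2| ^ ((3:ℝ)/2)) := by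
  rw [Measure.volume_eq_prod, integral_prod _ h]
  have hinner : ∀ z₁ : ℝ, ∫ z₂ : ℝ, (f (x₁ - z₁, x₂) - f (x₁ - z₁, x₂ - z₂)) * w z₁
      / (|z₁| ^ ((3:ℝ)/2) * |z₂| ^ ((3:ℝ)/2))
      = (∫ z₂ : ℝ, (f (x₁ - z₁, x₂) - f (x₁ - z₁, x₂ - z₂)) / |z₂| ^ ((3:ℝ)/2))
          * (w z₁ / |z₁| ^ ((3:ℝ)/2)) := by
    intro z₁
    rw [← integral_mul_const]
    exact integral_congr_ae (ae_of_all _ fun z₂ => by ring)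
  simp only [hinner]
  simp only [sqrtD2, mul_assoc, mul_div_assoc, integral_const_mul]
  ring

theorem sqrtDD_mul {f g : ℝ × ℝ → ℝ} {C D : ℝ} (hf : HasDifferenceBounds f C)
    (hg : HasDifferenceBounds g D) (Cf x₁ x₂ : ℝ) :
    sqrtDD Cf (fun y₁ y₂ => f (y₁, y₂) * g (y₁, y₂)) x₁ x₂
      = sqrtDD Cf (fun y₁ y₂ => f (y₁, y₂)) x₁ x₂ * g (x₁, x₂)
        + Cf * (∫ z : ℝ, sqrtD1 Cf (fun y₁ y₂ => f (y₁, y₂)) x₁ (x₂ - z) *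
            (g (x₁, x₂) - g (x₁, x₂ - z)) / |z| ^ ((3:ℝ)/2))
        + Cf * (∫ z : ℝ, sqrtD2 Cf (fun y₁ y₂ => f (y₁, y₂)) (x₁ - z) x₂ *
            (g (x₁, x₂) - g (x₁ - z, x₂)) / |z| ^ ((3:ℝ)/2))
        + Cf ^ 2 * ∫ z : ℝ × ℝ, f (x₁ - z.1, x₂ - z.2) * mixedDiff g x₁ x₂ z.1 z.2 /
            (|z.1| ^ ((3:ℝ)/2) * |z.2| ^ ((3:ℝ)/2)) := by
  have hfc := hf.continuous
  have hgc := hg.continuous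
  have h₁ : Integrable fun z : ℝ × ℝ => mixedDiff f x₁ x₂ z.1 z.2 * g (x₁, x₂)
      / (|z.1| ^ ((3:ℝ)/2) * |z.2| ^ ((3:ℝ)/2)) :=
    integrable_div_abs_rpow_mul_abs_rpow_of_abs_le (A := C * D) (by norm_num) (by norm_num)
      (by unfold mixedDiff; fun_prop) fun z =>
      (abs_mul_le_of_abs_le (hf.abs_mixedDiff_le x₁ x₂ z.1 z.2) (hg.abs_le _)).trans_eq (by ring)
  have h₂ : Integrable fun z : ℝ × ℝ =>
      (f (x₁, x₂ - z.2) - f (x₁ - z.1, x₂ - z.2)) * (g (x₁, x₂) - g (x₁, x₂ - z.2))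
      / (|z.1| ^ ((3:ℝ)/2) * |z.2| ^ ((3:ℝ)/2)) :=
    integrable_div_abs_rpow_mul_abs_rpow_of_abs_le (A := C * D) (by norm_num) (by norm_num)
      (by fun_prop) fun z =>
      (abs_mul_le_of_abs_le (hf.abs_sub_le₁ _ _ _) (hg.abs_sub_le₂ _ _ _)).trans_eq (by ring)
  have h₃ : Integrable fun z : ℝ × ℝ =>
      (f (x₁ - z.1, x₂) - f (x₁ - z.1, x₂ - z.2)) * (g (x₁, x₂) - g (x₁ - z.1, x₂))
      / (|z.1| ^ ((3:ℝ)/2) * |z.2| ^ ((3:ℝ)/2)) :=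
    integrable_div_abs_rpow_mul_abs_rpow_of_abs_le (A := C * D) (by norm_num) (by norm_num)
      (by fun_prop) fun z =>
      (abs_mul_le_of_abs_le (hf.abs_sub_le₂ _ _ _) (hg.abs_sub_le₁ _ _ _)).trans_eq (by ring)
  have h₄ : Integrable fun z : ℝ × ℝ => f (x₁ - z.1, x₂ - z.2) * mixedDiff g x₁ x₂ z.1 z.2
      / (|z.1| ^ ((3:ℝ)/2) * |z.2| ^ ((3:ℝ)/2)) :=
    integrable_div_abs_rpow_mul_abs_rpow_of_abs_le (A := C * D) (by norm_num) (by norm_num)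
      (by unfold mixedDiff; fun_prop) fun z =>
      (abs_mul_le_of_abs_le (hf.abs_le _) (hg.abs_mixedDiff_le x₁ x₂ z.1 z.2)).trans_eq (by ring)
  rw [(hf.mul hg).sqrtDD_eq_integral, hf.sqrtDD_eq_integral, mul_integral_sqrtD1_mul_div_eq Cf h₂,
    mul_integral_sqrtD2_mul_div_eq Cf h₃]
  simp only [mixedDiff_mul, add_div]
  rw [integral_add ((h₁.fun_add h₂).fun_add h₃) h₄, integral_add (h₁.fun_add h₂) h₃,
    integral_add h₁ h₂]
  simp only [mul_div_right_comm _ (g (x₁, x₂)), integral_mul_const]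
  ring

theorem stmt_10_general (φ ψ : SchwartzMap (ℝ × ℝ) ℝ) (Cf : ℝ) (x₁ x₂ : ℝ) :
    sqrtDD Cf (fun y₁ y₂ => φ (y₁, y₂) * ψ (y₁, y₂)) x₁ x₂
      = sqrtDD Cf (fun y₁ y₂ => φ (y₁, y₂)) x₁ x₂ * ψ (x₁, x₂)
        + Cf * (∫ z : ℝ, sqrtD1 Cf (fun y₁ y₂ => φ (y₁, y₂)) x₁ (x₂ - z) *
            (ψ (x₁, x₂) - ψ (x₁, x₂ - z)) / |z| ^ ((3:ℝ)/2))
        + Cf * (∫ z : ℝ, sqrtD2 Cf (fun y₁ y₂ => φ (y₁, y₂)) (x₁ - z) x₂ *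
            (ψ (x₁, x₂) - ψ (x₁ - z, x₂)) / |z| ^ ((3:ℝ)/2))
        + Cf ^ 2 * ∫ z : ℝ × ℝ, φ (x₁ - z.1, x₂ - z.2) *
            (ψ (x₁, x₂) - ψ (x₁ - z.1, x₂) - ψ (x₁, x₂ - z.2) + ψ (x₁ - z.1, x₂ - z.2)) /
            (|z.1| ^ ((3:ℝ)/2) * |z.2| ^ ((3:ℝ)/2)) := by
  obtain ⟨C, hφ⟩ := φ.hasDifferenceBounds
  obtain ⟨D, hψ⟩ := ψ.hasDifferenceBounds
  exact sqrtDD_mul hφ hψ Cf x₁ x₂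

/-- Two-variable fractional Leibniz rule for the cross fractional derivative. -/
theorem stmt_10 (φ ψ : SchwartzMap (ℝ × ℝ) ℝ) (Cf : ℝ) (hCf : 0 < Cf)
    (hCfdef : 1 / Cf = ∫ z : ℝ, (1 - Real.cos (2 * Real.pi * z)) / |z| ^ ((3:ℝ)/2))
    (x₁ x₂ : ℝ) :
    sqrtDD Cf (fun y₁ y₂ => φ (y₁, y₂) * ψ (y₁, y₂)) x₁ x₂
      = sqrtDD Cf (fun y₁ y₂ => φ (y₁, y₂)) x₁ x₂ * ψ (x₁, x₂)
        + Cf * (∫ z : ℝ, sqrtD1 Cf (fun y₁ y₂ => φ (y₁, y₂)) x₁ (x₂ - z) *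
            (ψ (x₁, x₂) - ψ (x₁, x₂ - z)) / |z| ^ ((3:ℝ)/2))
        + Cf * (∫ z : ℝ, sqrtD2 Cf (fun y₁ y₂ => φ (y₁, y₂)) (x₁ - z) x₂ *
            (ψ (x₁, x₂) - ψ (x₁ - z, x₂)) / |z| ^ ((3:ℝ)/2))
        + Cf ^ 2 * ∫ z : ℝ × ℝ, φ (x₁ - z.1, x₂ - z.2) *
            (ψ (x₁, x₂) - ψ (x₁ - z.1, x₂) - ψ (x₁, x₂ - z.2) + ψ (x₁ - z.1, x₂ - z.2)) /
            (|z.1| ^ ((3:ℝ)/2) * |z.2| ^ ((3:ℝ)/2)) :=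
  stmt_10_general φ ψ Cf x₁ x₂
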